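/- arXiv:2201.09166 — 5 statements merged into one kernel-verified Lean document; each statement's English description precedes it below -/
import Mathlib

section
/- Let (Y, R_Y) and (Z, R_Z) be sets equipped with symmetric binary relations and let h : Y → Z be a relation-preserving map. Then h is overlap-monic with respect to ⋈_bin — that is, for all sets with symmetric binary relations (X₁, R_{X₁}), (X₂, R_{X₂}) and all relation-preserving maps f₁ : X₁ → Y, f₂ : X₂ → Y, if there exist no a₁ ∈ X₁, a₂ ∈ X₂ with R_Y(f₁(a₁), f₂(a₂)) then there exist no a₁, a₂ with R_Z(h(f₁(a₁)), h(f₂(a₂))) — if and only if h reflects the relations, i.e., R_Z(h(y₁), h(y₂)) implies R_Y(y₁, y₂) for all y₁, y₂ ∈ Y. -/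
universe u

/-- A map preserving binary relations. -/
def PreservesRel {X Y : Type u} (RX : X → X → Prop) (RY : Y → Y → Prop) (f : X → Y) : Prop :=
  ∀ a b, RX a b → RY (f a) (f b)

/-- The relation `⋈_bin` on a conterminous pair in `sBin`: no point of the image of `f₁`
is related by `R_Y` to a point of the image of `f₂`. -/
def BinDisjoint {X₁ X₂ Y : Type u} (RY : Y → Y → Prop) (f₁ : X₁ → Y) (f₂ : X₂ → Y) : Prop :=
  ¬ ∃ (a₁ : X₁) (a₂ : X₂), RY (f₁ a₁) (f₂ a₂)

/-!
The forward direction tests overlap-monicity on the two points `y₁, y₂` viewed as maps from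
the one-point set with the empty relation, which are `⋈_bin`-disjoint exactly when
`¬ R_Y y₁ y₂`.
-/

theorem preservesRel_of_emptyRelation {X Y : Type u} (RY : Y → Y → Prop) (f : X → Y) :
    PreservesRel (fun _ _ => False) RY f :=
  fun _ _ => False.elim

theorem symmetric_emptyRelation (X : Type u) : Symmetric (fun _ _ : X => False) :=
  fun _ _ => id

theorem binDisjoint_const_iff {Y : Type u} (RY : Y → Y → Prop) (y₁ y₂ : Y) :
    BinDisjoint RY (fun _ : PUnit.{u + 1} => y₁) (fun _ : PUnit.{u + 1} => y₂) ↔ ¬ RY y₁ y₂ :=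
  ⟨fun hdisj hy => hdisj ⟨.unit, .unit, hy⟩, fun hy ⟨_, _, hr⟩ => hy hr⟩

theorem BinDisjoint.comp_of_reflects {X₁ X₂ Y Z : Type u} {RY : Y → Y → Prop}
    {RZ : Z → Z → Prop} {h : Y → Z} (hrefl : ∀ y₁ y₂, RZ (h y₁) (h y₂) → RY y₁ y₂)
    {f₁ : X₁ → Y} {f₂ : X₂ → Y} (hdisj : BinDisjoint RY f₁ f₂) :
    BinDisjoint RZ (h ∘ f₁) (h ∘ f₂) :=
  fun ⟨a₁, a₂, hr⟩ => hdisj ⟨a₁, a₂, hrefl _ _ hr⟩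

theorem binDisjoint_overlapMonic_iff_reflects_general {Y Z : Type u}
    (RY : Y → Y → Prop) (RZ : Z → Z → Prop)
    (h : Y → Z) :
    (∀ {X₁ X₂ : Type u} (RX₁ : X₁ → X₁ → Prop) (RX₂ : X₂ → X₂ → Prop),
        Symmetric RX₁ → Symmetric RX₂ →
        ∀ (f₁ : X₁ → Y) (f₂ : X₂ → Y), PreservesRel RX₁ RY f₁ → PreservesRel RX₂ RY f₂ →
        BinDisjoint RY f₁ f₂ → BinDisjoint RZ (h ∘ f₁) (h ∘ f₂)) ↔
    (∀ y₁ y₂ : Y, RZ (h y₁) (h y₂) → RY y₁ y₂) := by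
  constructor
  · intro hmonic y₁ y₂ hz
    by_contra hy
    have hdisj := hmonic _ _ (symmetric_emptyRelation _) (symmetric_emptyRelation _) _ _
      (preservesRel_of_emptyRelation RY _) (preservesRel_of_emptyRelation RY _)
      ((binDisjoint_const_iff RY y₁ y₂).2 hy)
    exact (binDisjoint_const_iff RZ (h y₁) (h y₂)).1 hdisj hz
  · intro hrefl _ _ _ _ _ _ _ _ _ _
    exact BinDisjoint.comp_of_reflects hrefl

/-- A relation-preserving map `h : (Y,R_Y) → (Z,R_Z)` between sets with symmetric binary
relations is overlap-monic with respect to `⋈_bin` if and only if it reflects the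
relations. -/
theorem binDisjoint_overlapMonic_iff_reflects {Y Z : Type u}
    (RY : Y → Y → Prop) (RZ : Z → Z → Prop) (hRY : Symmetric RY) (hRZ : Symmetric RZ)
    (h : Y → Z) (hpres : PreservesRel RY RZ h) :
    (∀ {X₁ X₂ : Type u} (RX₁ : X₁ → X₁ → Prop) (RX₂ : X₂ → X₂ → Prop),
        Symmetric RX₁ → Symmetric RX₂ →
        ∀ (f₁ : X₁ → Y) (f₂ : X₂ → Y), PreservesRel RX₁ RY f₁ → PreservesRel RX₂ RY f₂ →
        BinDisjoint RY f₁ f₂ → BinDisjoint RZ (h ∘ f₁) (h ∘ f₂)) ↔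
    (∀ y₁ y₂ : Y, RZ (h y₁) (h y₂) → RY y₁ y₂) :=
  binDisjoint_overlapMonic_iff_reflects_general RY RZ h
end

section
/- Let (C, ⋈_C) and (D, ⋈_D) be categories equipped with disjointness relations, and let F : C → D be a functor that preserves and reflects the ⋈-relations and is moreover full and essentially surjective on objects. Then F preserves overlap-monics: for any morphism h : c → d in C, if h is overlap-monic in (C, ⋈_C) then F(h) is overlap-monic in (D, ⋈_D). -/
open CategoryTheory

/-- A disjointness relation on a category `C`. -/
def IsDisjointnessRel {C : Type*} [Category C]
    (R : ∀ ⦃b₁ b₂ c : C⦄, (b₁ ⟶ c) → (b₂ ⟶ c) → Prop) : Prop :=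
  (∀ {b₁ b₂ c : C} (f₁ : b₁ ⟶ c) (f₂ : b₂ ⟶ c), R f₁ f₂ → R f₂ f₁) ∧
  (∀ {a₁ a₂ b₁ b₂ c : C} (f₁ : b₁ ⟶ c) (f₂ : b₂ ⟶ c) (g₁ : a₁ ⟶ b₁) (g₂ : a₂ ⟶ b₂),
      R f₁ f₂ → R (g₁ ≫ f₁) (g₂ ≫ f₂)) ∧
  (∀ {b₁ b₂ c d : C} (f₁ : b₁ ⟶ c) (f₂ : b₂ ⟶ c) (h : c ⟶ d), IsIso h →
      R f₁ f₂ → R (f₁ ≫ h) (f₂ ≫ h))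

/-- A morphism `h : c ⟶ d` is overlap-monic with respect to `R` if post-composition
with `h` preserves the relation `R` on conterminous pairs into `c`. -/
def OverlapMonic {C : Type*} [Category C]
    (R : ∀ ⦃b₁ b₂ c : C⦄, (b₁ ⟶ c) → (b₂ ⟶ c) → Prop) {c d : C} (h : c ⟶ d) : Prop :=
  ∀ {b₁ b₂ : C} (f₁ : b₁ ⟶ c) (f₂ : b₂ ⟶ c), R f₁ f₂ → R (f₁ ≫ h) (f₂ ≫ h)

/-
Take `f₁ ⋈ f₂` into `F c`. Since `F` is essentially surjective and full, after pre-composing with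
isomorphisms of their domains both maps are images `F g₁, F g₂`, and pre-composition with an
isomorphism neither creates nor destroys disjointness. Reflection gives `g₁ ⋈ g₂`, overlap-monicity
of `h` gives `g₁ ≫ h ⋈ g₂ ≫ h`, and preservation carries this back to `D`.
-/
section

variable {C D : Type*} [Category C] [Category D]

theorem IsDisjointnessRel.comp_left {R : ∀ ⦃b₁ b₂ c : C⦄, (b₁ ⟶ c) → (b₂ ⟶ c) → Prop}
    (hR : IsDisjointnessRel R) {a₁ a₂ b₁ b₂ c : C} {f₁ : b₁ ⟶ c} {f₂ : b₂ ⟶ c}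
    (g₁ : a₁ ⟶ b₁) (g₂ : a₂ ⟶ b₂) (hf : R f₁ f₂) : R (g₁ ≫ f₁) (g₂ ≫ f₂) :=
  hR.2.1 f₁ f₂ g₁ g₂ hf

theorem IsDisjointnessRel.iso_hom_comp_iff {R : ∀ ⦃b₁ b₂ c : C⦄, (b₁ ⟶ c) → (b₂ ⟶ c) → Prop}
    (hR : IsDisjointnessRel R) {a₁ a₂ b₁ b₂ c : C} (e₁ : a₁ ≅ b₁) (e₂ : a₂ ≅ b₂)
    (f₁ : b₁ ⟶ c) (f₂ : b₂ ⟶ c) : R (e₁.hom ≫ f₁) (e₂.hom ≫ f₂) ↔ R f₁ f₂ := by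
  refine ⟨fun hf => ?_, hR.comp_left e₁.hom e₂.hom⟩
  simpa using hR.comp_left e₁.inv e₂.inv hf

theorem CategoryTheory.Functor.exists_iso_hom_comp_eq_map (F : C ⥤ D) [F.Full] [F.EssSurj]
    {b : D} {c : C} (f : b ⟶ F.obj c) :
    ∃ (a : C) (e : F.obj a ≅ b) (g : a ⟶ c), e.hom ≫ f = F.map g :=
  ⟨F.objPreimage b, F.objObjPreimageIso b, F.preimage _, (F.map_preimage _).symm⟩

end

theorem functor_preserves_overlapMonic_general {C D : Type*} [Category C] [Category D]
    (RC : ∀ ⦃b₁ b₂ c : C⦄, (b₁ ⟶ c) → (b₂ ⟶ c) → Prop)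
    (RD : ∀ ⦃b₁ b₂ c : D⦄, (b₁ ⟶ c) → (b₂ ⟶ c) → Prop)
    (hRD : IsDisjointnessRel RD)
    (F : C ⥤ D)
    (hpres : ∀ {b₁ b₂ c : C} (f₁ : b₁ ⟶ c) (f₂ : b₂ ⟶ c),
        RC f₁ f₂ → RD (F.map f₁) (F.map f₂))
    (hrefl : ∀ {b₁ b₂ c : C} (f₁ : b₁ ⟶ c) (f₂ : b₂ ⟶ c),
        RD (F.map f₁) (F.map f₂) → RC f₁ f₂)
    (hfull : F.Full) (hes : F.EssSurj)
    {c d : C} (h : c ⟶ d) (hmono : OverlapMonic RC h) :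
    OverlapMonic RD (F.map h) := by
  intro b₁ b₂ f₁ f₂ hf
  obtain ⟨a₁, e₁, g₁, hg₁⟩ := F.exists_iso_hom_comp_eq_map f₁
  obtain ⟨a₂, e₂, g₂, hg₂⟩ := F.exists_iso_hom_comp_eq_map f₂
  have hg : RC g₁ g₂ := hrefl g₁ g₂ (by rwa [← hg₁, ← hg₂, hRD.iso_hom_comp_iff])
  rw [← hRD.iso_hom_comp_iff e₁ e₂, ← Category.assoc, ← Category.assoc, hg₁, hg₂,
    ← F.map_comp, ← F.map_comp]
  exact hpres _ _ (hmono g₁ g₂ hg)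

/-- A functor preserving and reflecting disjointness relations which is full and
essentially surjective on objects preserves overlap-monics. -/
theorem functor_preserves_overlapMonic {C D : Type*} [Category C] [Category D]
    (RC : ∀ ⦃b₁ b₂ c : C⦄, (b₁ ⟶ c) → (b₂ ⟶ c) → Prop)
    (RD : ∀ ⦃b₁ b₂ c : D⦄, (b₁ ⟶ c) → (b₂ ⟶ c) → Prop)
    (hRC : IsDisjointnessRel RC) (hRD : IsDisjointnessRel RD)
    (F : C ⥤ D)
    (hpres : ∀ {b₁ b₂ c : C} (f₁ : b₁ ⟶ c) (f₂ : b₂ ⟶ c),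
        RC f₁ f₂ → RD (F.map f₁) (F.map f₂))
    (hrefl : ∀ {b₁ b₂ c : C} (f₁ : b₁ ⟶ c) (f₂ : b₂ ⟶ c),
        RD (F.map f₁) (F.map f₂) → RC f₁ f₂)
    (hfull : F.Full) (hes : F.EssSurj)
    {c d : C} (h : c ⟶ d) (hmono : OverlapMonic RC h) :
    OverlapMonic RD (F.map h) :=
  functor_preserves_overlapMonic_general RC RD hRD F hpres hrefl hfull hes h hmono
end

section
/- On the category of topological spaces and continuous maps, define f₁ ⋈_P f₂ for a conterminous pair of continuous maps f₁ : X₁ → Y, f₂ : X₂ → Y if and only if no points a₁ ∈ X₁ and a₂ ∈ X₂ have f₁(a₁) and f₂(a₂) joined by a continuous path in Y. Then a continuous map f : X → Y is overlap-monic with respect to ⋈_P — that is, for all topological spaces W₁, W₂ and all continuous maps g₁ : W₁ → X, g₂ : W₂ → X, g₁ ⋈_P g₂ implies (f ∘ g₁) ⋈_P (f ∘ g₂) — if and only if for all x, x' ∈ X, whenever f(x) and f(x') are joined by a path in Y, the points x and x' are joined by a path in X (equivalently, if and only if the induced map π₀(f) : π₀(X) → π₀(Y) on path components is injective). -/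
universe u

/-- Path-disjointness of a conterminous pair of continuous maps: no point of the image
of `f₁` is joined by a continuous path in the codomain to a point of the image of `f₂`. -/
def PathDisjoint {X₁ X₂ Y : Type u} [TopologicalSpace X₁] [TopologicalSpace X₂]
    [TopologicalSpace Y] (f₁ : C(X₁, Y)) (f₂ : C(X₂, Y)) : Prop :=
  ¬ ∃ (a₁ : X₁) (a₂ : X₂), Joined (f₁ a₁) (f₂ a₂)

theorem pathDisjoint_const_iff {W₁ W₂ X : Type u} [TopologicalSpace W₁] [TopologicalSpace W₂]
    [TopologicalSpace X] [Nonempty W₁] [Nonempty W₂] (x x' : X) :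
    PathDisjoint (ContinuousMap.const W₁ x) (ContinuousMap.const W₂ x') ↔ ¬ Joined x x' := by
  simp [PathDisjoint]

theorem PathDisjoint.comp_of_reflects_joined {W₁ W₂ X Y : Type u} [TopologicalSpace W₁]
    [TopologicalSpace W₂] [TopologicalSpace X] [TopologicalSpace Y] {f : C(X, Y)}
    (hf : ∀ x x' : X, Joined (f x) (f x') → Joined x x') {g₁ : C(W₁, X)} {g₂ : C(W₂, X)}
    (hg : PathDisjoint g₁ g₂) : PathDisjoint (f.comp g₁) (f.comp g₂) :=
  fun ⟨a₁, a₂, hj⟩ => hg ⟨a₁, a₂, hf _ _ hj⟩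

/-- A continuous map is overlap-monic with respect to the path-disjointness relation
if and only if it reflects joinedness of points (equivalently, the induced map on path
components is injective). -/
theorem pathDisjoint_overlapMonic_iff {X Y : Type u} [TopologicalSpace X]
    [TopologicalSpace Y] (f : C(X, Y)) :
    (∀ {W₁ W₂ : Type u} [TopologicalSpace W₁] [TopologicalSpace W₂]
        (g₁ : C(W₁, X)) (g₂ : C(W₂, X)),
        PathDisjoint g₁ g₂ → PathDisjoint (f.comp g₁) (f.comp g₂)) ↔
    (∀ x x' : X, Joined (f x) (f x') → Joined x x') := by
  refine ⟨fun hf x x' hj => ?_, fun hf _ _ _ _ _ _ => PathDisjoint.comp_of_reflects_joined hf⟩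
  by_contra hnj
  have hpts := hf (ContinuousMap.const PUnit x) (ContinuousMap.const PUnit x')
    ((pathDisjoint_const_iff x x').2 hnj)
  rw [ContinuousMap.comp_const, ContinuousMap.comp_const, pathDisjoint_const_iff] at hpts
  exact hpts hj
end

section
/- Let X be a smooth manifold (finite-dimensional, Hausdorff, second countable, without boundary) and let V be a smooth nowhere-vanishing vector field on X. Then there exists a smooth function f : X → ℝ with f(p) > 0 for every p ∈ X such that the rescaled vector field fV is complete, i.e., through every point p ∈ X there is an integral curve γ : ℝ → X of fV defined on all of ℝ with γ(0) = p. -/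
/-!
Let `lifetime v x ∈ (0, 1]` be the largest `a ≤ 1` such that an integral curve of `v` through `x`
exists on `(-a, a)`. Uniform local existence of solutions in a chart bounds it below by a positive
constant near each point, and gluing integral curves shows that it drops by at most `|u|` after
flowing for time `u`. A partition of unity gives a smooth `f` with `0 < f ≤ lifetime v / 4`. If
`γ` is the integral curve of `v` through `y`, the solution of `τ' = f (γ τ)` with `τ 0 = 0` moves
at most `lifetime v y / 2` in unit time, so `γ ∘ τ` is an integral curve of `f • v` on `(-1, 1)`.
Integral curves of uniform length through every point extend to all of `ℝ`.
-/

open Function Set Metric Filter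
open scoped Topology NNReal Manifold ContDiff

theorem exists_hasDerivAt_eq_comp_of_pos_of_le {h : ℝ → ℝ} {B : ℝ} (hh : Continuous h)
    (hpos : ∀ s, 0 < h s) (hB : ∀ s, h s ≤ B) :
    ∃ τ : ℝ → ℝ, τ 0 = 0 ∧ (∀ t, |τ t| ≤ B * |t|) ∧
      ∀ t, HasDerivAt τ (h (τ t)) t := by
  have hinv : Continuous fun u ↦ (h u)⁻¹ := hh.inv₀ fun u ↦ (hpos u).ne'
  set G : ℝ → ℝ := fun s ↦ ∫ u in (0 : ℝ)..s, (h u)⁻¹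
  have hG : ∀ s, HasDerivAt G (h s)⁻¹ s := fun s ↦
    intervalIntegral.integral_hasDerivAt_right (hinv.intervalIntegrable _ _)
      (hinv.stronglyMeasurableAtFilter _ _) hinv.continuousAt
  have hG0 : G 0 = 0 := intervalIntegral.integral_same
  have hGd : Differentiable ℝ G := fun s ↦ (hG s).differentiableAt
  have hB₀ : 0 < B⁻¹ := inv_pos.2 ((hpos 0).trans_le (hB 0))
  have hslope : ∀ ⦃x y⦄, x ≤ y → B⁻¹ * (y - x) ≤ G y - G x :=
    mul_sub_le_image_sub_of_le_deriv hGd fun s ↦ (hG s).deriv ▸ inv_anti₀ (hpos s) (hB s)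
  have hmono : StrictMono G :=
    strictMono_of_deriv_pos fun s ↦ (hG s).deriv ▸ inv_pos.2 (hpos s)
  have hsurj : Surjective G := by
    refine hGd.continuous.surjective ?_ ?_
    · refine tendsto_atTop_mono' _ ?_ (tendsto_id.const_mul_atTop hB₀)
      filter_upwards [eventually_ge_atTop 0] with y hy
      simpa [hG0] using hslope hy
    · refine tendsto_atBot_mono' _ ?_ (tendsto_id.const_mul_atBot hB₀)
      filter_upwards [eventually_le_atBot 0] with x hx
      simpa [hG0] using hslope hx
  let Φ := hmono.orderIsoOfSurjective G hsurj
  have hτ (t : ℝ) : HasDerivAt Φ.symm (h (Φ.symm t)) t := by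
    simpa using (hG (Φ.symm t)).of_local_left_inverse Φ.symm.continuous.continuousAt
      (inv_ne_zero (hpos _).ne') (.of_forall fun y ↦ Φ.apply_symm_apply y)
  have hτ0 : Φ.symm 0 = 0 := Φ.injective (by simp [Φ, hG0])
  refine ⟨Φ.symm, hτ0, fun t ↦ ?_, hτ⟩
  simpa [hτ0] using convex_univ.norm_image_sub_le_of_norm_hasDerivWithin_le
    (fun t _ ↦ (hτ t).hasDerivWithinAt) (fun s _ ↦ by
      rw [Real.norm_of_nonneg (hpos _).le]; exact hB _) (mem_univ 0) (mem_univ t)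

theorem IsPicardLindelof.exists_eq_forall_mem_Icc_hasDerivWithinAt_mem_closedBall
    {E : Type*} [NormedAddCommGroup E] [NormedSpace ℝ E] [CompleteSpace E]
    {f : ℝ → E → E} {tmin tmax : ℝ} {t₀ : Icc tmin tmax} {x₀ x : E} {a r L K : ℝ≥0}
    (hf : IsPicardLindelof f t₀ x₀ a r L K) (hx : x ∈ closedBall x₀ r) :
    ∃ α : ℝ → E, α t₀ = x ∧ ∀ t ∈ Icc tmin tmax,
      HasDerivWithinAt α (f t (α t)) (Icc tmin tmax) t ∧ α t ∈ closedBall x₀ a := by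
  obtain ⟨α, hα⟩ := ODE.FunSpace.exists_isFixedPt_next hf hx
  have hball (t : ℝ) : α.compProj t ∈ closedBall x₀ a :=
    α.compProj_mem_closedBall hf.mul_max_le
  refine ⟨α.compProj, by rw [ODE.FunSpace.compProj_val, ← hα, ODE.FunSpace.next_apply₀],
    fun t ht ↦ ⟨?_, hball t⟩⟩
  refine ODE.hasDerivWithinAt_picard_Icc t₀.2 hf.continuousOn_uncurry
    α.continuous_compProj.continuousOn (fun t _ ↦ hball t) x ht
    |>.congr_of_mem (fun t' ht' ↦ ?_) ht
  nth_rw 1 [← hα]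
  rw [ODE.FunSpace.compProj_of_mem ht', ODE.FunSpace.next_apply]

theorem ContDiffAt.exists_forall_mem_closedBall_exists_forall_mem_Ioo_hasDerivAt_mem
    {E : Type*} [NormedAddCommGroup E] [NormedSpace ℝ E] [CompleteSpace E]
    {f : E → E} {x₀ : E} {U : Set E} (hf : ContDiffAt ℝ 1 f x₀) (hU : U ∈ 𝓝 x₀) :
    ∃ r > (0 : ℝ), ∃ ε > (0 : ℝ), ∀ x ∈ closedBall x₀ r, ∃ α : ℝ → E,
      α 0 = x ∧ ∀ t ∈ Ioo (-ε) ε, HasDerivAt α (f (α t)) t ∧ α t ∈ U := by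
  obtain ⟨ε, hε, a, r, L, K, hr, hpl⟩ := IsPicardLindelof.of_contDiffAt_one hf
  obtain ⟨δ, hδ, hδU⟩ := nhds_basis_closedBall.mem_iff.1 hU
  have ha : r ≤ a := by
    have hmul := (hpl 0).mul_max_le
    simp only [zero_add, sub_zero, zero_sub, neg_neg, max_self] at hmul
    exact_mod_cast (by nlinarith [L.2] : (r : ℝ) ≤ a)
  set a' : ℝ≥0 := min a ⟨δ, hδ.le⟩
  have ha' : 0 < a' := lt_min (hr.trans_le ha) hδ
  obtain ⟨ε', hε', hpl'⟩ :=
    (hpl 0).exists_shrink_radius hε (min_le_left a _) (half_lt_self ha')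
  refine ⟨a' / 2, by positivity, ε', hε', fun x hx ↦ ?_⟩
  obtain ⟨α, hα0, hα⟩ := hpl'.exists_eq_forall_mem_Icc_hasDerivWithinAt_mem_closedBall hx
  refine ⟨α, hα0, fun t ht ↦ ?_⟩
  have ht' : t ∈ Icc (0 - ε') (0 + ε') := by
    rw [zero_sub, zero_add]; exact Ioo_subset_Icc_self ht
  obtain ⟨hderiv, hmem⟩ := hα t ht'
  refine ⟨hderiv.hasDerivAt (Icc_mem_nhds (by linarith [ht.1]) (by linarith [ht.2])), hδU ?_⟩
  exact closedBall_subset_closedBall (min_le_right (a : ℝ) δ) hmem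

section IntegralCurve

variable {E : Type*} [NormedAddCommGroup E] [NormedSpace ℝ E]
  {H : Type*} [TopologicalSpace H] {I : ModelWithCorners ℝ E H}
  {M : Type*} [TopologicalSpace M] [ChartedSpace H M]
  {v : (x : M) → TangentSpace I x}

theorem IsMIntegralCurveOn.comp_of_hasDerivAt {γ : ℝ → M} {J s : Set ℝ} {τ : ℝ → ℝ} {g : M → ℝ}
    (hγ : IsMIntegralCurveOn γ v J) (hJ : IsOpen J)
    (hτJ : MapsTo τ s J) (hτ : ∀ t ∈ s, HasDerivAt τ (g (γ (τ t))) t) :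
    IsMIntegralCurveOn (γ ∘ τ) (fun x ↦ g x • v x) s := by
  intro t ht
  have hγτ := (hγ (τ t) (hτJ ht)).hasMFDerivAt (hJ.mem_nhds (hτJ ht))
  have hτ' : HasMFDerivAt 𝓘(ℝ, ℝ) 𝓘(ℝ, ℝ) τ t
      ((1 : ℝ →L[ℝ] ℝ).smulRight (g (γ (τ t)))) :=
    (hτ t ht).hasFDerivAt.hasMFDerivAt
  have hcomp : ((1 : ℝ →L[ℝ] ℝ).smulRight (v (γ (τ t)) : E)).comp
      ((1 : ℝ →L[ℝ] ℝ).smulRight (g (γ (τ t)))) =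
      (1 : ℝ →L[ℝ] ℝ).smulRight (g (γ (τ t)) • v (γ (τ t)) : E) := by
    ext; simp
  exact ((hγτ.comp t hτ').congr_mfderiv hcomp).hasMFDerivWithinAt

theorem isMIntegralCurveOn_extChartAt_symm_comp [IsManifold I 1 M] {x₀ : M} {α : ℝ → E}
    {s : Set ℝ}
    (hα : ∀ t ∈ s, HasDerivAt α (tangentCoordChange I ((extChartAt I x₀).symm (α t)) x₀
        ((extChartAt I x₀).symm (α t)) (v ((extChartAt I x₀).symm (α t)))) t)
    (hαs : ∀ t ∈ s, α t ∈ interior (extChartAt I x₀).target) :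
    IsMIntegralCurveOn ((extChartAt I x₀).symm ∘ α) v s := by
  intro t ht
  set x := (extChartAt I x₀).symm (α t)
  have hαt : α t ∈ (extChartAt I x₀).target := interior_subset (hαs t ht)
  have hx₀ : x ∈ (extChartAt I x₀).source := (extChartAt I x₀).map_target hαt
  have hx : x ∈ (extChartAt I x).source := mem_extChartAt_source x
  refine HasMFDerivAt.hasMFDerivWithinAt ⟨(continuousAt_extChartAt_symm'' hαt).comp
    (hα t ht).continuousAt, HasDerivWithinAt.hasFDerivWithinAt
    (f := writtenInExtChartAt 𝓘(ℝ, ℝ) I t ((extChartAt I x₀).symm ∘ α)) (F := E)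
    (f' := v x) ?_⟩
  simp only [mfld_simps]
  refine HasDerivAt.hasDerivWithinAt ?_
  change HasDerivAt ((extChartAt I x ∘ (extChartAt I x₀).symm) ∘ α) (v x) t
  rw [← tangentCoordChange_self (I := I) (x := x) (z := x) (v := v x) hx]
  erw [← tangentCoordChange_comp (x := x₀) ⟨⟨hx, hx₀⟩, hx⟩]
  refine HasFDerivAt.comp_hasDerivAt _ ?_ (hα t ht)
  refine HasFDerivWithinAt.hasFDerivAt (s := range I) ?_ <| mem_nhds_iff.mpr
    ⟨_, interior_subset.trans (extChartAt_target_subset_range _), isOpen_interior, hαs t ht⟩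
  rw [← (extChartAt I x₀).right_inv hαt]
  exact hasFDerivWithinAt_tangentCoordChange ⟨hx₀, hx⟩

theorem exists_pos_eventually_exists_isMIntegralCurveOn [IsManifold I 1 M] [CompleteSpace E]
    [BoundarylessManifold I M] {x₀ : M}
    (hv : ContMDiffAt I I.tangent 1 (fun x ↦ (⟨x, v x⟩ : TangentBundle I M)) x₀) :
    ∃ ε > (0 : ℝ), ∀ᶠ x in 𝓝 x₀, ∃ γ : ℝ → M,
      γ 0 = x ∧ IsMIntegralCurveOn γ v (Ioo (-ε) ε) := by
  set e := extChartAt I x₀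
  have hint : interior e.target ∈ 𝓝 (e x₀) := isOpen_interior.mem_nhds
    (I.isInteriorPoint_iff.mp BoundarylessManifold.isInteriorPoint)
  have hw : ContDiffAt ℝ 1
      (fun z ↦ tangentCoordChange I (e.symm z) x₀ (e.symm z) (v (e.symm z))) (e x₀) := by
    rw [contMDiffAt_iff] at hv
    exact (hv.2.contDiffAt (range_mem_nhds_isInteriorPoint
      BoundarylessManifold.isInteriorPoint)).snd
  obtain ⟨r, hr, ε, hε, hsol⟩ :=
    hw.exists_forall_mem_closedBall_exists_forall_mem_Ioo_hasDerivAt_mem hint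
  refine ⟨ε, hε, ?_⟩
  filter_upwards [extChartAt_source_mem_nhds (I := I) x₀,
    (continuousAt_extChartAt (I := I) x₀).preimage_mem_nhds (closedBall_mem_nhds (e x₀) hr)]
    with x hx hxr
  obtain ⟨α, hα0, hα⟩ := hsol (e x) hxr
  exact ⟨e.symm ∘ α, by simp [hα0, e.left_inv hx],
    isMIntegralCurveOn_extChartAt_symm_comp (fun t ht ↦ (hα t ht).1) (fun t ht ↦ (hα t ht).2)⟩

-- Capped at `1` so that the supremum is over a bounded set.
noncomputable def lifetime (v : (x : M) → TangentSpace I x) (x : M) : ℝ :=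
  sSup {a | a ≤ 1 ∧ ∃ γ : ℝ → M, γ 0 = x ∧ IsMIntegralCurveOn γ v (Ioo (-a) a)}

section lifetime

variable {x : M} {γ : ℝ → M} {a : ℝ}

theorem lifetime_set_nonempty :
    {a | a ≤ 1 ∧ ∃ γ : ℝ → M, γ 0 = x ∧ IsMIntegralCurveOn γ v (Ioo (-a) a)}.Nonempty :=
  ⟨0, zero_le_one, fun _ ↦ x, rfl, by simp [IsMIntegralCurveOn]⟩

theorem lifetime_le_one : lifetime v x ≤ 1 :=
  csSup_le lifetime_set_nonempty fun _ ha ↦ ha.1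

theorem le_lifetime (ha : a ≤ 1) (hγx : γ 0 = x) (hγ : IsMIntegralCurveOn γ v (Ioo (-a) a)) :
    a ≤ lifetime v x :=
  le_csSup ⟨1, fun _ hb ↦ hb.1⟩ ⟨ha, γ, hγx, hγ⟩

theorem lifetime_nonneg (x : M) : 0 ≤ lifetime v x :=
  le_lifetime (γ := fun _ ↦ x) zero_le_one rfl (by simp [IsMIntegralCurveOn])

theorem exists_isMIntegralCurveOn_of_lt_lifetime (ha : a < lifetime v x) :
    ∃ γ : ℝ → M, γ 0 = x ∧ IsMIntegralCurveOn γ v (Ioo (-a) a) := by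
  obtain ⟨b, ⟨-, γ, hγx, hγ⟩, hab⟩ := exists_lt_of_lt_csSup lifetime_set_nonempty ha
  exact ⟨γ, hγx, hγ.mono (Ioo_subset_Ioo (neg_le_neg hab.le) hab.le)⟩

variable [IsManifold I 1 M]

theorem exists_pos_eventually_le_lifetime [CompleteSpace E] [BoundarylessManifold I M]
    (hv : ContMDiffAt I I.tangent 1 (fun x ↦ (⟨x, v x⟩ : TangentBundle I M)) x) :
    ∃ ε > (0 : ℝ), ∀ᶠ y in 𝓝 x, ε ≤ lifetime v y := by
  obtain ⟨ε, hε, hcurve⟩ := exists_pos_eventually_exists_isMIntegralCurveOn hv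
  refine ⟨min ε 1, lt_min hε one_pos, hcurve.mono fun y ⟨γ, hγy, hγ⟩ ↦ ?_⟩
  exact le_lifetime (min_le_right _ _) hγy
    (hγ.mono (Ioo_subset_Ioo (neg_le_neg (min_le_left _ _)) (min_le_left _ _)))

/-- A curve through `γ u` living longer than `lifetime v x + |u|` would, glued to `γ`, give a
curve through `x` living longer than `lifetime v x`. -/
theorem lifetime_apply_le_add [T2Space M] [BoundarylessManifold I M]
    (hv : ContMDiff I I.tangent 1 (fun x ↦ (⟨x, v x⟩ : TangentBundle I M)))
    (hγx : γ 0 = x) (hγ : IsMIntegralCurveOn γ v (Ioo (-a) a)) {u : ℝ} (hu : |u| < a) :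
    lifetime v (γ u) ≤ lifetime v x + |u| := by
  by_contra! h
  obtain ⟨b, hxb, hbu⟩ := exists_between (lt_sub_iff_add_lt.2 h)
  obtain ⟨δ, hδ, hδγ⟩ := exists_isMIntegralCurveOn_of_lt_lifetime (lt_sub_iff_add_lt.1 hbu)
  have hb : 0 < b := (lifetime_nonneg x).trans_lt hxb
  have hu' : -|u| ≤ u ∧ u ≤ |u| := ⟨neg_abs_le u, le_abs_self u⟩
  have hδu : IsMIntegralCurveOn (δ ∘ (· + -u)) v (Ioo (u - (b + |u|)) (u + (b + |u|))) :=
    (hδγ.comp_add (-u)).mono fun t ht ↦ by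
      simp only [mem_ofPred_eq, mem_Ioo] at ht ⊢; constructor <;> linarith [ht.1, ht.2]
  have hglue := isMIntegralCurveOn_piecewise hv hγ hδu (t₀ := u)
    ⟨abs_lt.1 hu, by constructor <;> linarith⟩ (by simp [hδ])
  refine hxb.not_ge (le_lifetime ?_ ?_ (hglue.mono ?_))
  · linarith [lifetime_le_one (v := v) (x := γ u), abs_nonneg u]
  · have h0 : (0 : ℝ) ∈ Ioo (-a) a := ⟨by linarith [abs_nonneg u], by linarith [abs_nonneg u]⟩
    rw [piecewise_eq_of_mem _ _ _ h0, hγx]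
  · refine subset_union_of_subset_right (Ioo_subset_Ioo ?_ ?_) _ <;> linarith

end lifetime

theorem exists_isMIntegralCurveOn_smul_of_le_lifetime [IsManifold I 1 M] [T2Space M]
    [BoundarylessManifold I M]
    (hv : ContMDiff I I.tangent 1 (fun x ↦ (⟨x, v x⟩ : TangentBundle I M)))
    {f : M → ℝ} (hf : Continuous f) (hfpos : ∀ x, 0 < f x)
    (hfle : ∀ x, f x ≤ lifetime v x / 4) (y : M) :
    ∃ σ : ℝ → M, σ 0 = y ∧ IsMIntegralCurveOn σ (fun x ↦ f x • v x) (Ioo (-1) 1) := by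
  set B := lifetime v y / 2 with hB_def
  have hB : 0 < B := by linarith [hfpos y, hfle y]
  obtain ⟨γ, hγy, hγ⟩ := exists_isMIntegralCurveOn_of_lt_lifetime (a := 3 / 2 * B) (v := v)
    (x := y) (by linarith)
  have hBγ : Icc (-B) B ⊆ Ioo (-(3 / 2 * B)) (3 / 2 * B) :=
    Icc_subset_Ioo (by linarith) (by linarith)
  set clamp : ℝ → ℝ := fun s ↦ projIcc (-B) B (by linarith) s
  have hclamp (s : ℝ) : clamp s ∈ Icc (-B) B := (projIcc _ _ _ s).2
  -- Along `γ` the lifetime stays below `3 * B`, so the speed `f` stays below `B`.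
  have hspeed (s : ℝ) : f (γ (clamp s)) ≤ B := by
    have := lifetime_apply_le_add hv hγy hγ (abs_lt.2 (hBγ (hclamp s)))
    linarith [hfle (γ (clamp s)), abs_le.2 (hclamp s)]
  obtain ⟨τ, hτ0, hτB, hτ⟩ :=
    exists_hasDerivAt_eq_comp_of_pos_of_le (h := fun s ↦ f (γ (clamp s)))
      (hf.comp (hγ.continuousOn.comp_continuous
        (continuous_subtype_val.comp continuous_projIcc) fun s ↦ hBγ (hclamp s)))
      (fun _ ↦ hfpos _) hspeed
  have hτI : MapsTo τ (Ioo (-1) 1) (Ioo (-B) B) := fun t ht ↦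
    abs_lt.1 ((hτB t).trans_lt (mul_lt_of_lt_one_right hB (abs_lt.2 ht)))
  refine ⟨γ ∘ τ, by simp [hτ0, hγy], hγ.comp_of_hasDerivAt isOpen_Ioo
    (fun t ht ↦ hBγ (Ioo_subset_Icc_self (hτI ht))) fun t ht ↦ ?_⟩
  have hclamp_τ : clamp (τ t) = τ t := by
    simp [clamp, projIcc_of_mem _ (Ioo_subset_Icc_self (hτI ht))]
  simpa only [hclamp_τ] using hτ t

theorem exists_contMDiff_pos_le_lifetime [FiniteDimensional ℝ E] [IsManifold I ∞ M]
    [T2Space M] [SigmaCompactSpace M] [BoundarylessManifold I M]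
    (hv : ContMDiff I I.tangent 1 (fun x ↦ (⟨x, v x⟩ : TangentBundle I M))) :
    ∃ f : M → ℝ, ContMDiff I 𝓘(ℝ, ℝ) ∞ f ∧ ∀ x, 0 < f x ∧ f x ≤ lifetime v x / 4 := by
  have : CompleteSpace E := FiniteDimensional.complete ℝ E
  obtain ⟨f, hf⟩ := exists_contMDiffMap_forall_mem_convex_of_local_const I
    (t := fun x ↦ Ioc 0 (lifetime v x / 4)) (fun _ ↦ convex_Ioc _ _) fun x ↦ by
      obtain ⟨ε, hε, hlife⟩ := exists_pos_eventually_le_lifetime (hv x)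
      exact ⟨ε / 4, hlife.mono fun y hy ↦ ⟨by positivity, by linarith⟩⟩
  exact ⟨f, f.contMDiff, hf⟩

end IntegralCurve

theorem exists_smooth_pos_rescale_complete_general
    {E : Type*} [NormedAddCommGroup E] [NormedSpace ℝ E] [FiniteDimensional ℝ E]
    {H : Type*} [TopologicalSpace H] (I : ModelWithCorners ℝ E H) [I.Boundaryless]
    {M : Type*} [TopologicalSpace M] [ChartedSpace H M] [IsManifold I (⊤ : ℕ∞) M]
    [T2Space M] [SecondCountableTopology M]
    (V : (x : M) → TangentSpace I x)
    (hV : ContMDiff I I.tangent (⊤ : ℕ∞) (fun x => (⟨x, V x⟩ : TangentBundle I M))) :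
    ∃ f : M → ℝ, ContMDiff I 𝓘(ℝ, ℝ) (⊤ : ℕ∞) f ∧ (∀ p : M, 0 < f p) ∧
      ∀ p : M, ∃ γ : ℝ → M, γ 0 = p ∧ IsMIntegralCurve γ (fun x => f x • V x) := by
  have : LocallyCompactSpace M := Manifold.locallyCompact_of_finiteDimensional I
  have hV₁ : ContMDiff I I.tangent 1 (fun x ↦ (⟨x, V x⟩ : TangentBundle I M)) :=
    hV.of_le (by exact_mod_cast le_top)
  obtain ⟨f, hf, hfV⟩ := exists_contMDiff_pos_le_lifetime hV₁
  refine ⟨f, hf, fun p ↦ (hfV p).1, exists_isMIntegralCurve_of_isMIntegralCurveOn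
    ((hf.of_le (by exact_mod_cast le_top)).smul_section hV₁) one_pos fun p ↦ ?_⟩
  exact exists_isMIntegralCurveOn_smul_of_le_lifetime hV₁ hf.continuous
    (fun x ↦ (hfV x).1) (fun x ↦ (hfV x).2) p

/-- Any smooth nowhere-vanishing vector field on a smooth manifold (finite-dimensional,
Hausdorff, second countable, boundaryless) can be rescaled by a smooth everywhere-positive
function to a complete vector field: through every point there is an integral curve of the
rescaled field defined on all of `ℝ`. -/
theorem exists_smooth_pos_rescale_complete
    {E : Type*} [NormedAddCommGroup E] [NormedSpace ℝ E] [FiniteDimensional ℝ E]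
    {H : Type*} [TopologicalSpace H] (I : ModelWithCorners ℝ E H) [I.Boundaryless]
    {M : Type*} [TopologicalSpace M] [ChartedSpace H M] [IsManifold I (⊤ : ℕ∞) M]
    [T2Space M] [SecondCountableTopology M]
    (V : (x : M) → TangentSpace I x)
    (hV : ContMDiff I I.tangent (⊤ : ℕ∞) (fun x => (⟨x, V x⟩ : TangentBundle I M)))
    (hV0 : ∀ x : M, V x ≠ 0) :
    ∃ f : M → ℝ, ContMDiff I 𝓘(ℝ, ℝ) (⊤ : ℕ∞) f ∧ (∀ p : M, 0 < f p) ∧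
      ∀ p : M, ∃ γ : ℝ → M, γ 0 = p ∧ IsMIntegralCurve γ (fun x => f x • V x) :=
  exists_smooth_pos_rescale_complete_general I V hV
end

section
/- Let M be a topological space and let θ : ℝ × M → M be a continuous action of the additive group ℝ on M such that the relation R = {(p, q) ∈ M × M : there exists τ ≥ 0 with q = θ(τ, p)} is a closed subset of M × M. Fix p ∈ M and suppose the orbit map θ⁽ᵖ⁾ : ℝ → M, τ ↦ θ(τ, p), is injective. Then θ⁽ᵖ⁾ is a closed map: the image under θ⁽ᵖ⁾ of every closed subset of ℝ is closed in M. -/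
/-!
An injective map `f` out of `ℝ` is closed as soon as the images of all half-lines `Iic a`
and `Ici b` are closed: every closed set is an intersection of sets `Iic a ∪ Ici b`, and
injective images commute with intersections. For an orbit map these images are slices of the
closed relation `R`: `f '' Iic a = {q | (q, f a) ∈ R}` and `f '' Ici b = {q | (f b, q) ∈ R}`.
-/

open Set

section OrderTopology

variable {α : Type*} [LinearOrder α] [TopologicalSpace α] [OrderTopology α]
  [NoMinOrder α] [NoMaxOrder α]

theorem IsClosed.eq_biInter_Iic_union_Ici {A : Set α} (hA : IsClosed A) :
    A = ⋂ ab ∈ {ab : α × α | A ⊆ Iic ab.1 ∪ Ici ab.2}, Iic ab.1 ∪ Ici ab.2 := by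
  refine Subset.antisymm (fun x hx => mem_iInter₂.2 fun ab hab => hab hx) fun x hx => ?_
  by_contra hxA
  obtain ⟨a, b, ⟨hax, hxb⟩, hab⟩ :=
    mem_nhds_iff_exists_Ioo_subset.1 (hA.isOpen_compl.mem_nhds hxA)
  have hA_sub : A ⊆ Iic a ∪ Ici b := fun y hy => by
    by_contra hy'
    simp only [mem_union, mem_Iic, mem_Ici, not_or, not_le] at hy'
    exact hab hy' hy
  rcases mem_iInter₂.1 hx (a, b) hA_sub with h | h
  · exact not_le.2 hax h
  · exact not_le.2 hxb h

theorem isClosedMap_of_isClosed_image_Iic_Ici {X : Type*} [TopologicalSpace X] {f : α → X}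
    (hf : Function.Injective f) (hIic : ∀ a, IsClosed (f '' Iic a))
    (hIci : ∀ b, IsClosed (f '' Ici b)) : IsClosedMap f := by
  intro A hA
  rcases A.eq_empty_or_nonempty with rfl | ⟨x, -⟩
  · simp
  rw [hA.eq_biInter_Iic_union_Ici, hf.injOn.image_biInter_eq ⟨(x, x), fun y _ => le_total y x⟩]
  exact isClosed_biInter fun ab _ => image_union f _ _ ▸ (hIic ab.1).union (hIci ab.2)

end OrderTopology

section Flow

variable {G M : Type*} [AddCommGroup G] [LinearOrder G] [IsOrderedAddMonoid G]

def forwardOrbitRel (θ : G × M → M) : Set (M × M) :=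
  {pq | ∃ τ : G, 0 ≤ τ ∧ pq.2 = θ (τ, pq.1)}

variable {θ : G × M → M}

theorem image_Iic_orbit_eq_preimage_forwardOrbitRel (h0 : ∀ p : M, θ (0, p) = p)
    (hadd : ∀ (τ τ' : G) (p : M), θ (τ + τ', p) = θ (τ, θ (τ', p))) (p : M) (a : G) :
    (fun τ => θ (τ, p)) '' Iic a = (fun q => (q, θ (a, p))) ⁻¹' forwardOrbitRel θ := by
  ext q
  constructor
  · rintro ⟨σ, hσ, rfl⟩
    refine ⟨a - σ, sub_nonneg.2 hσ, ?_⟩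
    simp only [← hadd, sub_add_cancel]
  · rintro ⟨τ, hτ, hq⟩
    refine ⟨-τ + a, by simpa using hτ, ?_⟩
    simp only at hq ⊢
    rw [hadd, hq, ← hadd, neg_add_cancel, h0]

theorem image_Ici_orbit_eq_preimage_forwardOrbitRel
    (hadd : ∀ (τ τ' : G) (p : M), θ (τ + τ', p) = θ (τ, θ (τ', p))) (p : M) (b : G) :
    (fun τ => θ (τ, p)) '' Ici b = Prod.mk (θ (b, p)) ⁻¹' forwardOrbitRel θ := by
  ext q
  constructor
  · rintro ⟨σ, hσ, rfl⟩
    refine ⟨σ - b, sub_nonneg.2 hσ, ?_⟩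
    simp only [← hadd, sub_add_cancel]
  · rintro ⟨τ, hτ, hq⟩
    exact ⟨τ + b, le_add_of_nonneg_left hτ, (hadd τ b p).trans hq.symm⟩

end Flow

theorem closedRel_orbitMap_isClosedMap_general {M : Type*} [TopologicalSpace M]
    (θ : ℝ × M → M)
    (h0 : ∀ p : M, θ (0, p) = p)
    (hadd : ∀ (τ τ' : ℝ) (p : M), θ (τ + τ', p) = θ (τ, θ (τ', p)))
    (hclosed : IsClosed {pq : M × M | ∃ τ : ℝ, 0 ≤ τ ∧ pq.2 = θ (τ, pq.1)})
    (p : M) (hinj : Function.Injective fun τ : ℝ => θ (τ, p)) :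
    ∀ A : Set ℝ, IsClosed A → IsClosed ((fun τ : ℝ => θ (τ, p)) '' A) := by
  have hR : IsClosed (forwardOrbitRel θ) := hclosed
  refine isClosedMap_of_isClosed_image_Iic_Ici hinj (fun a => ?_) (fun b => ?_)
  · rw [image_Iic_orbit_eq_preimage_forwardOrbitRel h0 hadd]
    exact hR.preimage (continuous_id.prodMk continuous_const)
  · rw [image_Ici_orbit_eq_preimage_forwardOrbitRel hadd]
    exact hR.preimage (continuous_const.prodMk continuous_id)

/-- For a continuous `ℝ`-action on `M` whose relation
`{(p, q) : ∃ τ ≥ 0, q = θ (τ, p)}` is closed in `M × M`, any injective orbit map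
`τ ↦ θ (τ, p)` is a closed map. -/
theorem closedRel_orbitMap_isClosedMap {M : Type*} [TopologicalSpace M]
    (θ : ℝ × M → M) (hcont : Continuous θ)
    (h0 : ∀ p : M, θ (0, p) = p)
    (hadd : ∀ (τ τ' : ℝ) (p : M), θ (τ + τ', p) = θ (τ, θ (τ', p)))
    (hclosed : IsClosed {pq : M × M | ∃ τ : ℝ, 0 ≤ τ ∧ pq.2 = θ (τ, pq.1)})
    (p : M) (hinj : Function.Injective fun τ : ℝ => θ (τ, p)) :
    ∀ A : Set ℝ, IsClosed A → IsClosed ((fun τ : ℝ => θ (τ, p)) '' A) :=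
  closedRel_orbitMap_isClosedMap_general θ h0 hadd hclosed p hinj
end
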